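/- Let h_C and h_A be two admissible static heuristics on a transition system (h_C(s) ≤ h*(s) and h_A(s) ≤ h*(s) for all states s). Define the information source σ_lazy whose information space is the set of functions i : S → {C, A}, with initial object the constant function C, update(i, t) = i for all transitions t, and refine(i, s) equal to i except that i(s) is set to A; and define the lazy evaluation heuristic h(s, i) = h_{i(s)}(s). Then h is dyn-admissible, and consequently dynA* with the reeval flag enabled using h returns optimal solutions. -/

import Mathlib

open scoped ENNReal Classical

/-! ## Transition systems -/

/-- A labeled transition: (origin, label, target). -/
abbrev Tran (S L : Type) := S × L × S

/-- A transition system with states `S`, labels `L`, a cost function,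
a set of labeled transitions, an initial state and a set of goal states. -/
structure TransSys (S L : Type) where
  cost : L → NNReal
  trans : Set (Tran S L)
  init : S
  goal : Set S

namespace TransSys

variable {S L : Type}

/-- `IsPathFrom ts s π s'`: `π` is a path from `s` to `s'` in `ts`. -/
inductive IsPathFrom (ts : TransSys S L) : S → List (Tran S L) → S → Prop
  | nil (s : S) : IsPathFrom ts s [] s
  | cons {s m e : S} {l : L} {π : List (Tran S L)} :
      (s, l, m) ∈ ts.trans → IsPathFrom ts m π e → IsPathFrom ts s ((s, l, m) :: π) e

/-- The cost of a path: sum of the costs of its labels. -/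
def pathCost (ts : TransSys S L) (π : List (Tran S L)) : NNReal :=
  (π.map fun t => ts.cost t.2.1).sum

/-- A state is reachable if there is a path from the initial state to it. -/
def Reachable (ts : TransSys S L) (s : S) : Prop := ∃ π, ts.IsPathFrom ts.init π s

/-- A solution is a path from the initial state to a goal state. -/
def Solution (ts : TransSys S L) (π : List (Tran S L)) : Prop :=
  ∃ s ∈ ts.goal, ts.IsPathFrom ts.init π s

def Solvable (ts : TransSys S L) : Prop := ∃ π, ts.Solution π

/-- `h*`: minimal cost of a path from `s` to a goal state (`∞` if none exists). -/
noncomputable def hstar (ts : TransSys S L) (s : S) : ℝ≥0∞ :=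
  sInf {x : ℝ≥0∞ | ∃ π, ∃ g ∈ ts.goal, ts.IsPathFrom s π g ∧ x = (ts.pathCost π : ℝ≥0∞)}

/-- `g*`: minimal cost of a path from the initial state to `s` (`∞` if none exists). -/
noncomputable def gstar (ts : TransSys S L) (s : S) : ℝ≥0∞ :=
  sInf {x : ℝ≥0∞ | ∃ π, ts.IsPathFrom ts.init π s ∧ x = (ts.pathCost π : ℝ≥0∞)}

end TransSys

/-! ## Information sources and dynamic heuristics -/

/-- An information source for a transition system (Definition 1). -/
structure InfoSource {S L : Type} (ts : TransSys S L) (I : Type) where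
  initInfo : I
  update : I → Tran S L → I
  refine : I → S → I

namespace InfoSource

variable {S L I : Type} {ts : TransSys S L}

/-- `ReachWith σ i K`: information object `i` is obtained from the initial
information by updates/refinements, where `K` is the set consisting of the
initial state together with all targets of used transitions, every refined state
lies in `K`, and the origin of every used transition lies in `K` (Definition 2). -/
inductive ReachWith (σ : InfoSource ts I) : I → Set S → Prop
  | base : ReachWith σ σ.initInfo {ts.init}
  | update {i : I} {K : Set S} {t : Tran S L} :
      ReachWith σ i K → t ∈ ts.trans → t.1 ∈ K →
      ReachWith σ (σ.update i t) (insert t.2.2 K)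
  | refine {i : I} {K : Set S} {s : S} :
      ReachWith σ i K → s ∈ K → ReachWith σ (σ.refine i s) K

/-- An information object is reachable (Definition 2). -/
def ReachableInfo (σ : InfoSource ts I) (i : I) : Prop := ∃ K, σ.ReachWith i K

end InfoSource

section HeuristicProps

variable {S L I : Type} (ts : TransSys S L) (σ : InfoSource ts I) (h : S → I → ℝ≥0∞)

def DynSafe : Prop := ∀ (s : S) (i : I), σ.ReachableInfo i → h s i = ⊤ → ts.hstar s = ⊤

def DynAdmissible : Prop := ∀ (s : S) (i : I), σ.ReachableInfo i → h s i ≤ ts.hstar s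

def DynConsistent : Prop :=
  ∀ t ∈ ts.trans, ∀ i : I, σ.ReachableInfo i →
    h t.1 i ≤ (ts.cost t.2.1 : ℝ≥0∞) + h t.2.2 i

def DynGoalAware : Prop := ∀ s ∈ ts.goal, ∀ i : I, σ.ReachableInfo i → h s i = 0

def DynMonotonic : Prop :=
  ∀ i : I, σ.ReachableInfo i →
    (∀ s : S, ∀ t ∈ ts.trans, h s i ≤ h s (σ.update i t)) ∧
    (∀ s s' : S, h s i ≤ h s (σ.refine i s'))

end HeuristicProps

/-! ## Progression sources -/

/-- A progression source (Definition 5). -/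
structure ProgSource {S L : Type} (ts : TransSys S L) (J : Type) where
  initJ : J
  progress : J → Tran S L → J
  merge : J → J → J

/-- The progression-based information source built on a progression source
(Definition 7): per-state information, updated by progressing along a
transition and merging with existing information at the target. -/
noncomputable def progInfoSource {S L J : Type} (ts : TransSys S L) (p : ProgSource ts J) :
    InfoSource ts (S → Option J) where
  initInfo := fun x => if x = ts.init then some p.initJ else none
  update := fun i t => fun x =>
    if x = t.2.2 then
      match i t.1 with
      | none => i t.2.2
      | some j =>
        match i t.2.2 with
        | none => some (p.progress j t)
        | some j' => some (p.merge (p.progress j t) j')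
    else i x
  refine := fun i _ => i

/-- The parent source (Definition 6): per-state `g`-values and parent pointers. -/
noncomputable def parentSource {S L : Type} (ts : TransSys S L) :
    ProgSource ts (NNReal × Option (Tran S L)) where
  initJ := (0, none)
  progress := fun j t => (j.1 + ts.cost t.2.1, some t)
  merge := fun a b => if a.1 ≤ b.1 then a else b

/-- `ParentChain par s π`: `π` is the sequence of transitions obtained by
following parent pointers backwards from `s` until a state whose stored
pointer is `⊥` (read forwards). -/
inductive ParentChain {S L : Type} (par : S → Option (NNReal × Option (Tran S L))) :
    S → List (Tran S L) → Prop
  | nil {s : S} {g : NNReal} : par s = some (g, none) → ParentChain par s []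
  | cons {g : NNReal} {t : Tran S L} {π : List (Tran S L)} :
      par t.2.2 = some (g, some t) → ParentChain par t.1 π →
      ParentChain par t.2.2 (π ++ [t])

/-! ## The dynamic heuristic search framework (Algorithm 1) -/

/-- A configuration of the framework: the known states and one information
object per information source. -/
structure FConfig (S : Type) {ι : Type} (I : ι → Type) where
  known : Set S
  infos : ∀ k, I k

/-- The (non-terminating) operations of the framework. -/
inductive FOp where
  | genUnknown
  | genKnown
  | refineOp
deriving DecidableEq

section Framework

variable {S L ι : Type} {I : ι → Type} (ts : TransSys S L) (σ : ∀ k, InfoSource ts (I k))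

/-- One step of the framework, labeled by the operation performed. -/
inductive FStep : FConfig S I → FOp → FConfig S I → Prop
  | genUnknown {c : FConfig S I} {t : Tran S L} :
      t ∈ ts.trans → t.1 ∈ c.known → t.2.2 ∉ c.known →
      FStep c .genUnknown ⟨insert t.2.2 c.known, fun k => (σ k).update (c.infos k) t⟩
  | genKnown {c : FConfig S I} {t : Tran S L} :
      t ∈ ts.trans → t.1 ∈ c.known → t.2.2 ∈ c.known →
      FStep c .genKnown ⟨c.known, fun k => (σ k).update (c.infos k) t⟩
  | refineStep {c : FConfig S I} {s : S} :
      s ∈ c.known →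
      FStep c .refineOp ⟨c.known, fun k => (σ k).refine (c.infos k) s⟩

/-- The initial configuration of the framework. -/
def initFConfig : FConfig S I := ⟨{ts.init}, fun k => (σ k).initInfo⟩

/-- A configuration occurring in some finite execution of the framework. -/
def FReach (c : FConfig S I) : Prop :=
  Relation.ReflTransGen (fun a b => ∃ op, FStep ts σ a op b) (initFConfig ts σ) c

/-- Applicability of the gen-unknown operation. -/
def GenUnknownApp (c : FConfig S I) : Prop :=
  ∃ t ∈ ts.trans, t.1 ∈ c.known ∧ t.2.2 ∉ c.known

/-- Applicability of decl-solvable: a goal state is known. -/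
def DeclSolvableApp (c : FConfig S I) : Prop := ∃ s ∈ c.known, s ∈ ts.goal

/-- Applicability of decl-unsolvable: no goal state is known and
no transition leaves the known states. -/
def DeclUnsolvableApp (c : FConfig S I) : Prop :=
  (∀ s ∈ c.known, s ∉ ts.goal) ∧ ¬ GenUnknownApp ts c

end Framework

/-! ## dynA* (Algorithm 2) -/

/-- An open-list entry: (state, g-entry, h-entry). -/
abbrev Entry (S : Type) := S × NNReal × ℝ≥0∞

/-- The f-value of an open-list entry. -/
noncomputable def fval {S : Type} (en : Entry S) : ℝ≥0∞ := (en.2.1 : ℝ≥0∞) + en.2.2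

/-- A configuration of dynA*: known states, closed set, open queue, the parent
information (g-values and parent pointers, i.e. the information of σ_p) and the
information object of the heuristic's source σ_h. -/
structure AConfig (S L I : Type) where
  known : Set S
  closed : Set S
  openq : Multiset (Entry S)
  par : S → Option (NNReal × Option (Tran S L))
  info : I

/-- The g-value currently stored for a state. -/
noncomputable def gOf {S L I : Type} (c : AConfig S L I) (s : S) : NNReal :=
  ((c.par s).map Prod.fst).getD 0

section DynAStar

variable {S L I : Type} (ts : TransSys S L) (σh : InfoSource ts I) (h : S → I → ℝ≥0∞)

/-- Updating the parent information along a transition `t` (the update of the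
progression-based parent source σ_p): the target's pair becomes
`(g(origin)+cost, t)` unless the previously stored g-value is smaller. -/
noncomputable def parUpd (par : S → Option (NNReal × Option (Tran S L))) (t : Tran S L) :
    S → Option (NNReal × Option (Tran S L)) := fun x =>
  if x = t.2.2 then
    match par t.1 with
    | none => par t.2.2
    | some (g, _) =>
      match par t.2.2 with
      | none => some (g + ts.cost t.2.1, some t)
      | some (g', p') =>
          if g + ts.cost t.2.1 ≤ g' then some (g + ts.cost t.2.1, some t)
          else some (g', p')
  else par x

/-- Processing one successor transition `t = (s, ℓ, s')` during the expansion of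
`s`: record the old g-value (undefined iff `s'` unknown), update both information
objects along `t`, add `s'` to the known states, and insert `(s', g(s'), h(s'))`
into the open queue if `h(s') < ∞` and `s'` is new or reached more cheaply
(removing `s'` from closed in the latter case: reopening). -/
noncomputable def procSucc (c : AConfig S L I) (t : Tran S L) : AConfig S L I :=
  let oldg : Option NNReal := if t.2.2 ∈ c.known then some (gOf c t.2.2) else none
  let par' := parUpd ts c.par t
  let info' := σh.update c.info t
  let c' : AConfig S L I :=
    { known := insert t.2.2 c.known, closed := c.closed, openq := c.openq,
      par := par', info := info' }
  let gnew : NNReal := ((par' t.2.2).map Prod.fst).getD 0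
  let hnew : ℝ≥0∞ := h t.2.2 info'
  if hnew = ⊤ then c'
  else
    match oldg with
    | none => { c' with openq := (t.2.2, gnew, hnew) ::ₘ c.openq }
    | some go =>
      if gnew < go then
        { c' with closed := c.closed \ {t.2.2},
                  openq := (t.2.2, gnew, hnew) ::ₘ c.openq }
      else c'

/-- Expanding a state: process all its successor transitions in order. -/
noncomputable def expandAll (c : AConfig S L I) (l : List (Tran S L)) : AConfig S L I :=
  l.foldl (procSucc ts σh h) c

/-- `l` enumerates (without repetition) exactly the transitions with origin `s`. -/
def SuccList (s : S) (l : List (Tran S L)) : Prop :=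
  l.Nodup ∧ ∀ t : Tran S L, t ∈ l ↔ t ∈ ts.trans ∧ t.1 = s

/-- Labels recording what happened in one iteration of dynA*. -/
inductive ALab (S L : Type) where
  | dup (en : Entry S)
  | reev (en : Entry S)
  | expand (en : Entry S)
  | retGoal (en : Entry S) (π : List (Tran S L))
  | unsolv

/-- The entry popped from the open queue in an iteration, if any. -/
def popped {S L : Type} : ALab S L → Option (Entry S)
  | .dup en => some en
  | .reev en => some en
  | .expand en => some en
  | .retGoal en _ => some en
  | .unsolv => none

/-- The outcome of one iteration of dynA*. -/
inductive AOut (S L I : Type) where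
  | cont (c : AConfig S L I)
  | retPath (π : List (Tran S L))
  | unsolvable

/-- One iteration of dynA* (Algorithm 2), with optional re-evaluation.
An entry of minimal f-value is popped; duplicates (closed states) are discarded;
otherwise both information objects are refined on the popped state (σ_p's refine
is the identity, so `par` is unchanged); with `reeval` set, a state whose
heuristic value increased is re-inserted instead of expanded; expanding a goal
state returns the path obtained by following parent pointers; expanding a
non-goal state processes all its successor transitions. If the open queue is
empty, 'unsolvable' is returned. -/
inductive AStep (reeval : Bool) : AConfig S L I → ALab S L → AOut S L I → Prop
  | dup {c : AConfig S L I} {en : Entry S} {rest : Multiset (Entry S)} :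
      c.openq = en ::ₘ rest → (∀ en' ∈ c.openq, fval en ≤ fval en') →
      en.1 ∈ c.closed →
      AStep reeval c (.dup en) (.cont { c with openq := rest })
  | reevFin {c : AConfig S L I} {en : Entry S} {rest : Multiset (Entry S)} :
      c.openq = en ::ₘ rest → (∀ en' ∈ c.openq, fval en ≤ fval en') →
      en.1 ∉ c.closed → reeval = true →
      en.2.2 < h en.1 (σh.refine c.info en.1) →
      h en.1 (σh.refine c.info en.1) ≠ ⊤ →
      AStep reeval c (.reev en)
        (.cont { c with info := σh.refine c.info en.1,
                        openq := (en.1, gOf c en.1, h en.1 (σh.refine c.info en.1)) ::ₘ rest })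
  | reevInf {c : AConfig S L I} {en : Entry S} {rest : Multiset (Entry S)} :
      c.openq = en ::ₘ rest → (∀ en' ∈ c.openq, fval en ≤ fval en') →
      en.1 ∉ c.closed → reeval = true →
      en.2.2 < h en.1 (σh.refine c.info en.1) →
      h en.1 (σh.refine c.info en.1) = ⊤ →
      AStep reeval c (.reev en)
        (.cont { c with info := σh.refine c.info en.1, openq := rest })
  | retGoal {c : AConfig S L I} {en : Entry S} {rest : Multiset (Entry S)}
      {π : List (Tran S L)} :
      c.openq = en ::ₘ rest → (∀ en' ∈ c.openq, fval en ≤ fval en') →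
      en.1 ∉ c.closed →
      ¬(reeval = true ∧ en.2.2 < h en.1 (σh.refine c.info en.1)) →
      en.1 ∈ ts.goal → ParentChain c.par en.1 π →
      AStep reeval c (.retGoal en π) (.retPath π)
  | expand {c : AConfig S L I} {en : Entry S} {rest : Multiset (Entry S)}
      {l : List (Tran S L)} :
      c.openq = en ::ₘ rest → (∀ en' ∈ c.openq, fval en ≤ fval en') →
      en.1 ∉ c.closed →
      ¬(reeval = true ∧ en.2.2 < h en.1 (σh.refine c.info en.1)) →
      en.1 ∉ ts.goal → SuccList ts en.1 l →
      AStep reeval c (.expand en)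
        (.cont (expandAll ts σh h
          { c with openq := rest, closed := insert en.1 c.closed,
                   info := σh.refine c.info en.1 } l))
  | unsolv {c : AConfig S L I} :
      c.openq = 0 → AStep reeval c .unsolv .unsolvable

/-- The initial configuration of dynA*. -/
noncomputable def initAConfig : AConfig S L I where
  known := {ts.init}
  closed := ∅
  openq :=
    if h ts.init σh.initInfo = ⊤ then 0 else {(ts.init, 0, h ts.init σh.initInfo)}
  par := fun x => if x = ts.init then some (0, none) else none
  info := σh.initInfo

/-- `IsExec ts σh h reeval e lab N`: `e 0, …, e N` are the configurations at the
beginnings of the iterations of an execution of dynA*, with `lab n` recording what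
happened in iteration `n`. -/
def IsExec (reeval : Bool) (e : ℕ → AConfig S L I) (lab : ℕ → ALab S L) (N : ℕ) : Prop :=
  e 0 = initAConfig ts σh h ∧
  ∀ n < N, AStep ts σh h reeval (e n) (lab n) (.cont (e (n + 1)))

/-- A state `s` is settled at iteration `n` if it was expanded in some earlier
iteration at whose beginning its stored g-value was `g*(s)`. -/
def SettledAt (e : ℕ → AConfig S L I) (lab : ℕ → ALab S L) (n : ℕ) (s : S) : Prop :=
  ∃ m < n, ∃ en : Entry S, lab m = .expand en ∧ en.1 = s ∧
    (gOf (e m) s : ℝ≥0∞) = ts.gstar s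

/-- Iterated refinement of an information object on a fixed state. -/
def refIter (i : I) (s : S) : ℕ → I
  | 0 => i
  | n + 1 => σh.refine (refIter i s n) s

end DynAStar

/-! ## Statement 17 -/


/-- The two evaluation modes of lazy heuristic evaluation. -/
inductive CA where
  | C
  | A

/-- The information source of lazy evaluation: it records for each state which
of the two heuristics was last used; refining on a state switches it to the
accurate heuristic. -/
noncomputable def lazySrc {S L : Type} (ts : TransSys S L) : InfoSource ts (S → CA) where
  initInfo := fun _ => CA.C
  update := fun i _ => i
  refine := fun i s => fun x => if x = s then CA.A else i x

/-- The lazy evaluation heuristic. -/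
def lazyH {S : Type} (hC hA : S → ℝ≥0∞) : S → (S → CA) → ℝ≥0∞ :=
  fun s i => match i s with
    | CA.C => hC s
    | CA.A => hA s

section AuxStmt17

open TransSys

variable {S L I : Type} {ts : TransSys S L} {σh : InfoSource ts I} {h : S → I → ℝ≥0∞}

/-! ### Path lemmas -/

lemma pathCost_append (ts : TransSys S L) (α β : List (Tran S L)) :
    ts.pathCost (α ++ β) = ts.pathCost α + ts.pathCost β := by
  simp [TransSys.pathCost]

lemma pathCost_cons (ts : TransSys S L) (t : Tran S L) (π : List (Tran S L)) :
    ts.pathCost (t :: π) = ts.cost t.2.1 + ts.pathCost π := by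
  simp [TransSys.pathCost]

lemma isPathFrom_append {s m e : S} {α β : List (Tran S L)}
    (h1 : ts.IsPathFrom s α m) (h2 : ts.IsPathFrom m β e) : ts.IsPathFrom s (α ++ β) e := by
  induction h1 with
  | nil => exact h2
  | cons htr _ ih => exact .cons htr (ih h2)

lemma hstar_le_of_path {s z : S} {β : List (Tran S L)} (hz : z ∈ ts.goal)
    (hp : ts.IsPathFrom s β z) : ts.hstar s ≤ (ts.pathCost β : ℝ≥0∞) :=
  sInf_le ⟨β, z, hz, hp, rfl⟩

lemma hstar_ne_top_of_path {s z : S} {β : List (Tran S L)} (hz : z ∈ ts.goal)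
    (hp : ts.IsPathFrom s β z) : ts.hstar s ≠ ⊤ :=
  ne_top_of_le_ne_top ENNReal.coe_ne_top (hstar_le_of_path hz hp)

/-! ### gOf and parUpd lemmas -/

lemma gOf_eq {c : AConfig S L I} {s : S} {g : NNReal} {p : Option (Tran S L)}
    (hp : c.par s = some (g, p)) : gOf c s = g := by
  unfold gOf; rw [hp]; rfl

lemma parUpd_ne {par : S → Option (NNReal × Option (Tran S L))} {t : Tran S L} {s : S}
    (hs : s ≠ t.2.2) : parUpd ts par t s = par s := by
  simp [parUpd, hs]

lemma parUpd_mono {par : S → Option (NNReal × Option (Tran S L))} {t : Tran S L} {s : S}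
    {g : NNReal} {p : Option (Tran S L)} (hp : par s = some (g, p)) :
    ∃ g' p', parUpd ts par t s = some (g', p') ∧ g' ≤ g := by
  by_cases hs : s = t.2.2
  · subst hs
    cases h1 : par t.1 with
    | none => exact ⟨g, p, by simp [parUpd, h1, hp], le_rfl⟩
    | some gq =>
      obtain ⟨gx, q⟩ := gq
      by_cases hle : gx + ts.cost t.2.1 ≤ g
      · exact ⟨gx + ts.cost t.2.1, some t, by simp [parUpd, h1, hp, hle], hle⟩
      · exact ⟨g, p, by simp [parUpd, h1, hp, hle], le_rfl⟩
  · exact ⟨g, p, by rw [parUpd_ne hs, hp], le_rfl⟩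

lemma parUpd_target {par : S → Option (NNReal × Option (Tran S L))} {t : Tran S L}
    {gx : NNReal} {q : Option (Tran S L)} (h1 : par t.1 = some (gx, q)) :
    ∃ g' p', parUpd ts par t t.2.2 = some (g', p') ∧ g' ≤ gx + ts.cost t.2.1 := by
  cases h2 : par t.2.2 with
  | none => exact ⟨gx + ts.cost t.2.1, some t, by simp [parUpd, h1, h2], le_rfl⟩
  | some gp =>
    obtain ⟨g', p'⟩ := gp
    by_cases hle : gx + ts.cost t.2.1 ≤ g'
    · exact ⟨gx + ts.cost t.2.1, some t, by simp [parUpd, h1, h2, hle], le_rfl⟩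
    · exact ⟨g', p', by simp [parUpd, h1, h2, hle], le_of_not_ge hle⟩

/-- Characterization of `parUpd` at an arbitrary state. -/
lemma parUpd_char (par : S → Option (NNReal × Option (Tran S L))) (t : Tran S L) (s : S) :
    parUpd ts par t s = par s ∨
    (s = t.2.2 ∧ ∃ gx q, par t.1 = some (gx, q) ∧
      parUpd ts par t s = some (gx + ts.cost t.2.1, some t) ∧
      (∀ g' p', par s = some (g', p') → gx + ts.cost t.2.1 ≤ g')) := by
  by_cases hs : s = t.2.2
  · subst hs
    cases h1 : par t.1 with
    | none => left; simp [parUpd, h1]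
    | some gq =>
      obtain ⟨gx, q⟩ := gq
      cases h2 : par t.2.2 with
      | none =>
        right
        exact ⟨rfl, gx, q, rfl, by simp [parUpd, h1, h2], fun g' p' hg => by cases hg⟩
      | some gp =>
        obtain ⟨g', p'⟩ := gp
        by_cases hle : gx + ts.cost t.2.1 ≤ g'
        · right
          refine ⟨rfl, gx, q, rfl, by simp [parUpd, h1, h2, hle], fun g'' p'' hg => ?_⟩
          cases hg
          exact hle
        · left; simp [parUpd, h1, h2, hle]
  · left; exact parUpd_ne hs

/-! ### Invariant bundle -/

variable (ts) in
structure BInv (c : AConfig S L I) : Prop where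
  kp : ∀ s ∈ c.known, ∃ g p, c.par s = some (g, p)
  pn : ∀ s g, c.par s = some (g, none) → s = ts.init
  ps : ∀ s g t, c.par s = some (g, some t) → t ∈ ts.trans ∧ t.2.2 = s ∧
      ∃ g1 p1, c.par t.1 = some (g1, p1) ∧ g1 + ts.cost t.2.1 ≤ g
  ek : ∀ en : Entry S, en ∈ c.openq → en.1 ∈ c.known
  eh : ∀ en : Entry S, en ∈ c.openq → en.2.2 ≤ ts.hstar en.1
  eg : ∀ en : Entry S, en ∈ c.openq → ∃ g p, c.par en.1 = some (g, p) ∧ g ≤ en.2.1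
  oc : ∀ m ∈ c.known, m ∉ c.closed → ts.hstar m ≠ ⊤ → ∃ hv, (m, gOf c m, hv) ∈ c.openq
  cg : ∀ m ∈ c.closed, m ∉ ts.goal
  ck : c.closed ⊆ c.known

/-- "closed states fully expanded, except for transitions still in `l2`". -/
def CEx (ts : TransSys S L) (c : AConfig S L I) (l2 : List (Tran S L)) : Prop :=
  ∀ m ∈ c.closed, ts.hstar m ≠ ⊤ → ∀ t ∈ ts.trans, t.1 = m → t ∉ l2 →
    t.2.2 ∈ c.known ∧ gOf c t.2.2 ≤ gOf c m + ts.cost t.2.1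

/-- For every path from the initial state to a goal state, some state on the path
is known, not closed, and has a stored g-value at most the prefix cost. -/
def RO (ts : TransSys S L) (c : AConfig S L I) : Prop :=
  ∀ z ∈ ts.goal, ∀ π0, ts.IsPathFrom ts.init π0 z →
    ∃ x α β, π0 = α ++ β ∧ ts.IsPathFrom ts.init α x ∧ ts.IsPathFrom x β z ∧
      x ∈ c.known ∧ x ∉ c.closed ∧ (gOf c x : ℝ≥0∞) ≤ (ts.pathCost α : ℝ≥0∞)

def AExt (c c' : AConfig S L I) : Prop :=
  (∀ s g p, c.par s = some (g, p) → ∃ g' p', c'.par s = some (g', p') ∧ g' ≤ g) ∧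
  c.known ⊆ c'.known ∧ c'.closed ⊆ c.closed ∧ ∀ a ∈ c.openq, a ∈ c'.openq

lemma AExt.rfl (c : AConfig S L I) : AExt c c :=
  ⟨fun s g p hp => ⟨g, p, hp, le_rfl⟩, subset_rfl, subset_rfl, fun _ ha => ha⟩

lemma AExt.trans {a b c : AConfig S L I} (h1 : AExt a b) (h2 : AExt b c) : AExt a c := by
  refine ⟨fun s g p hp => ?_, h1.2.1.trans h2.2.1, h2.2.2.1.trans h1.2.2.1,
    fun x hx => h2.2.2.2 x (h1.2.2.2 x hx)⟩
  obtain ⟨g', p', hp', hle1⟩ := h1.1 s g p hp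
  obtain ⟨g'', p'', hp'', hle2⟩ := h2.1 s g' p' hp'
  exact ⟨g'', p'', hp'', hle2.trans hle1⟩

/-! ### procSucc lemmas -/

lemma procSucc_par (c : AConfig S L I) (t : Tran S L) :
    (procSucc ts σh h c t).par = parUpd ts c.par t := by
  unfold procSucc
  dsimp only
  split
  · rfl
  · split
    · rfl
    · split <;> rfl

lemma procSucc_known (c : AConfig S L I) (t : Tran S L) :
    (procSucc ts σh h c t).known = insert t.2.2 c.known := by
  unfold procSucc
  dsimp only
  split
  · rfl
  · split
    · rfl
    · split <;> rfl

lemma gOf_procSucc (c : AConfig S L I) (t : Tran S L) (s : S) :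
    gOf (procSucc ts σh h c t) s = ((parUpd ts c.par t s).map Prod.fst).getD 0 := by
  unfold gOf
  rw [procSucc_par]

lemma procSucc_closed_cases (c : AConfig S L I) (t : Tran S L) :
    (procSucc ts σh h c t).closed = c.closed ∨
    (procSucc ts σh h c t).closed = c.closed \ {t.2.2} := by
  unfold procSucc
  dsimp only
  split
  · exact Or.inl rfl
  · split
    · exact Or.inl rfl
    · split
      · exact Or.inr rfl
      · exact Or.inl rfl

lemma procSucc_closed_sub (c : AConfig S L I) (t : Tran S L) :
    (procSucc ts σh h c t).closed ⊆ c.closed := by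
  rcases procSucc_closed_cases (ts := ts) (σh := σh) (h := h) c t with hc | hc
  · exact hc.le
  · exact hc ▸ Set.diff_subset

lemma procSucc_openq_cases (c : AConfig S L I) (t : Tran S L) :
    (procSucc ts σh h c t).openq = c.openq ∨
    (procSucc ts σh h c t).openq =
      (t.2.2, gOf (procSucc ts σh h c t) t.2.2, h t.2.2 (σh.update c.info t)) ::ₘ c.openq := by
  rw [gOf_procSucc]
  unfold procSucc
  dsimp only
  split
  · exact Or.inl rfl
  · split
    · exact Or.inr rfl
    · split
      · exact Or.inr rfl
      · exact Or.inl rfl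

lemma procSucc_openq_sup (c : AConfig S L I) (t : Tran S L) :
    ∀ a ∈ c.openq, a ∈ (procSucc ts σh h c t).openq := by
  rcases procSucc_openq_cases (ts := ts) (σh := σh) (h := h) c t with hc | hc <;> rw [hc]
  · exact fun a ha => ha
  · exact fun a ha => Multiset.mem_cons_of_mem ha

lemma procSucc_ext (c : AConfig S L I) (t : Tran S L) : AExt c (procSucc ts σh h c t) := by
  refine ⟨fun s g p hp => ?_, ?_, procSucc_closed_sub c t, procSucc_openq_sup c t⟩
  · rw [procSucc_par]; exact parUpd_mono hp
  · rw [procSucc_known]; exact Set.subset_insert _ _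

/-- In the "no strict improvement" case the stored g-value at the target is unchanged. -/
lemma gOf_procSucc_of_not_lt {c : AConfig S L I} {t : Tran S L} {g' : NNReal}
    {p' : Option (Tran S L)} (hp' : c.par t.2.2 = some (g', p'))
    (hnlt : ¬ ((parUpd ts c.par t t.2.2).map Prod.fst).getD 0 < gOf c t.2.2) :
    gOf (procSucc ts σh h c t) t.2.2 = gOf c t.2.2 := by
  obtain ⟨g'', p'', hpu, hle2⟩ := parUpd_mono (ts := ts) (t := t) hp'
  have he : ((parUpd ts c.par t t.2.2).map Prod.fst).getD 0 = g'' := by rw [hpu]; rfl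
  rw [gOf_procSucc, he]
  have h1 : g'' ≤ gOf c t.2.2 := by rw [gOf_eq hp']; exact hle2
  exact le_antisymm h1 (not_lt.mp (he ▸ hnlt))
lemma procSucc_top {c : AConfig S L I} {t : Tran S L}
    (hT : h t.2.2 (σh.update c.info t) = ⊤) :
    (procSucc ts σh h c t).closed = c.closed ∧ (procSucc ts σh h c t).openq = c.openq := by
  unfold procSucc
  simp [hT]

lemma procSucc_new {c : AConfig S L I} {t : Tran S L}
    (hT : h t.2.2 (σh.update c.info t) ≠ ⊤) (hK : t.2.2 ∉ c.known) :
    (procSucc ts σh h c t).closed = c.closed ∧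
    (procSucc ts σh h c t).openq =
      (t.2.2, gOf (procSucc ts σh h c t) t.2.2, h t.2.2 (σh.update c.info t)) ::ₘ c.openq := by
  rw [gOf_procSucc]
  unfold procSucc
  simp [hT, hK]
  exact ⟨rfl, rfl⟩

lemma procSucc_lt {c : AConfig S L I} {t : Tran S L}
    (hT : h t.2.2 (σh.update c.info t) ≠ ⊤) (hK : t.2.2 ∈ c.known)
    (hlt : ((parUpd ts c.par t t.2.2).map Prod.fst).getD 0 < gOf c t.2.2) :
    (procSucc ts σh h c t).closed = c.closed \ {t.2.2} ∧
    (procSucc ts σh h c t).openq =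
      (t.2.2, gOf (procSucc ts σh h c t) t.2.2, h t.2.2 (σh.update c.info t)) ::ₘ c.openq := by
  rw [gOf_procSucc]
  unfold procSucc
  simp [hT, hK, hlt]

lemma procSucc_ge {c : AConfig S L I} {t : Tran S L}
    (hT : h t.2.2 (σh.update c.info t) ≠ ⊤) (hK : t.2.2 ∈ c.known)
    (hnlt : ¬ ((parUpd ts c.par t t.2.2).map Prod.fst).getD 0 < gOf c t.2.2) :
    (procSucc ts σh h c t).closed = c.closed ∧ (procSucc ts σh h c t).openq = c.openq := by
  unfold procSucc
  simp [hT, hK, hnlt]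

lemma procSucc_closed_gOf (hle : ∀ (s : S) (i : I), h s i ≤ ts.hstar s)
    {c : AConfig S L I} {t : Tran S L} {m : S} (hb : BInv ts c)
    (hm : m ∈ (procSucc ts σh h c t).closed) (hst : ts.hstar m ≠ ⊤) :
    m ∈ c.closed ∧ gOf (procSucc ts σh h c t) m = gOf c m := by
  have hmc : m ∈ c.closed := procSucc_closed_sub c t hm
  refine ⟨hmc, ?_⟩
  by_cases hsm : m = t.2.2
  · subst hsm
    have hK : t.2.2 ∈ c.known := hb.ck hmc
    obtain ⟨g', p', hp'⟩ := hb.kp _ hK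
    have hT : h t.2.2 (σh.update c.info t) ≠ ⊤ :=
      fun hT => hst (top_le_iff.mp (hT ▸ hle _ _))
    by_cases hlt : ((parUpd ts c.par t t.2.2).map Prod.fst).getD 0 < gOf c t.2.2
    · have hcl := (procSucc_lt (σh := σh) hT hK hlt).1
      rw [hcl] at hm
      exact absurd hm (by simp)
    · exact gOf_procSucc_of_not_lt hp' hlt
  · rw [gOf_procSucc, parUpd_ne hsm]
    rfl

lemma procSucc_binv (hle : ∀ (s : S) (i : I), h s i ≤ ts.hstar s)
    {c : AConfig S L I} {t : Tran S L} (htr : t ∈ ts.trans)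
    (hpt1 : ∃ g q, c.par t.1 = some (g, q)) (hb : BInv ts c) :
    BInv ts (procSucc ts σh h c t) := by
  obtain ⟨gx, q, hgx⟩ := hpt1
  constructor
  -- kp
  · intro s hs
    rw [procSucc_known] at hs
    rw [procSucc_par]
    rcases hs with hs | hs
    · subst hs
      obtain ⟨g', p', hpu, _⟩ := parUpd_target (ts := ts) hgx
      exact ⟨g', p', hpu⟩
    · obtain ⟨g, p, hp⟩ := hb.kp _ hs
      obtain ⟨g', p', hpu, _⟩ := parUpd_mono (ts := ts) (t := t) hp
      exact ⟨g', p', hpu⟩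
  -- pn
  · intro s g hp
    rw [procSucc_par] at hp
    rcases parUpd_char (ts := ts) c.par t s with hc | ⟨_, gx', q', _, hset, _⟩
    · rw [hc] at hp
      exact hb.pn _ _ hp
    · rw [hset] at hp
      simp at hp
  -- ps
  · intro s g t0 hp
    rw [procSucc_par] at hp
    rcases parUpd_char (ts := ts) c.par t s with hc | ⟨hs, gx', q', hgx', hset, _⟩
    · rw [hc] at hp
      obtain ⟨htr0, ht02, g1, p1, hp1, hsum⟩ := hb.ps _ _ _ hp
      obtain ⟨g1', p1', hpu, hle1⟩ := parUpd_mono (ts := ts) (t := t) hp1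
      exact ⟨htr0, ht02, g1', p1', by rw [procSucc_par]; exact hpu,
        le_trans (add_le_add_left hle1 _) hsum⟩
    · rw [hset] at hp
      simp only [Option.some.injEq, Prod.mk.injEq] at hp
      obtain ⟨hg, ht0⟩ := hp
      obtain rfl : t = t0 := ht0
      subst hg
      obtain ⟨g1', p1', hpu, hle1⟩ := parUpd_mono (ts := ts) (t := t) hgx'
      exact ⟨htr, hs.symm, g1', p1', by rw [procSucc_par]; exact hpu,
        add_le_add_left hle1 _⟩
  -- ek
  · intro en hen
    rw [procSucc_known]
    rcases procSucc_openq_cases (ts := ts) (σh := σh) (h := h) c t with hq | hq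
    · rw [hq] at hen
      exact Set.mem_insert_of_mem _ (hb.ek _ hen)
    · rw [hq] at hen
      rcases Multiset.mem_cons.mp hen with rfl | hen
      · exact Set.mem_insert _ _
      · exact Set.mem_insert_of_mem _ (hb.ek _ hen)
  -- eh
  · intro en hen
    rcases procSucc_openq_cases (ts := ts) (σh := σh) (h := h) c t with hq | hq
    · rw [hq] at hen
      exact hb.eh _ hen
    · rw [hq] at hen
      rcases Multiset.mem_cons.mp hen with rfl | hen
      · exact hle _ _
      · exact hb.eh _ hen
  -- eg
  · intro en hen
    rw [procSucc_par]
    rcases procSucc_openq_cases (ts := ts) (σh := σh) (h := h) c t with hq | hq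
    · rw [hq] at hen
      obtain ⟨g, p, hp, hle1⟩ := hb.eg _ hen
      obtain ⟨g', p', hpu, hle2⟩ := parUpd_mono (ts := ts) (t := t) hp
      exact ⟨g', p', hpu, hle2.trans hle1⟩
    · rw [hq] at hen
      rcases Multiset.mem_cons.mp hen with rfl | hen
      · obtain ⟨g', p', hpu, _⟩ := parUpd_target (ts := ts) hgx
        refine ⟨g', p', hpu, ?_⟩
        have hgg : gOf (procSucc ts σh h c t) t.2.2 = g' := by
          rw [gOf_procSucc, hpu]; rfl
        exact le_of_eq hgg.symm
      · obtain ⟨g, p, hp, hle1⟩ := hb.eg _ hen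
        obtain ⟨g', p', hpu, hle2⟩ := parUpd_mono (ts := ts) (t := t) hp
        exact ⟨g', p', hpu, hle2.trans hle1⟩
  -- oc
  · intro m hm hmc hst
    rw [procSucc_known] at hm
    by_cases hmt : m = t.2.2
    · subst hmt
      have hT : h t.2.2 (σh.update c.info t) ≠ ⊤ :=
        fun hT => hst (top_le_iff.mp (hT ▸ hle _ _))
      by_cases hK : t.2.2 ∈ c.known
      · by_cases hlt : ((parUpd ts c.par t t.2.2).map Prod.fst).getD 0 < gOf c t.2.2
        · refine ⟨h t.2.2 (σh.update c.info t), ?_⟩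
          rw [(procSucc_lt (σh := σh) hT hK hlt).2]
          exact Multiset.mem_cons_self _ _
        · have hq := (procSucc_ge (σh := σh) hT hK hlt).2
          have hcl := (procSucc_ge (σh := σh) hT hK hlt).1
          rw [hcl] at hmc
          obtain ⟨g', p', hp'⟩ := hb.kp _ hK
          obtain ⟨hv, hmem⟩ := hb.oc _ hK hmc hst
          refine ⟨hv, ?_⟩
          rw [hq, gOf_procSucc_of_not_lt hp' hlt]
          exact hmem
      · refine ⟨h t.2.2 (σh.update c.info t), ?_⟩
        rw [(procSucc_new (σh := σh) hT hK).2]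
        exact Multiset.mem_cons_self _ _
    · have hmk : m ∈ c.known := hm.resolve_left hmt
      have hgm : gOf (procSucc ts σh h c t) m = gOf c m := by
        rw [gOf_procSucc, parUpd_ne hmt]; rfl
      have hmc' : m ∉ c.closed := by
        intro hc
        rcases procSucc_closed_cases (ts := ts) (σh := σh) (h := h) c t with he | he
        · exact hmc (he ▸ hc)
        · exact hmc (he ▸ Set.mem_diff_of_mem hc (by simpa using hmt))
      obtain ⟨hv, hmem⟩ := hb.oc m hmk hmc' hst
      exact ⟨hv, hgm ▸ procSucc_openq_sup c t _ hmem⟩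
  -- cg
  · exact fun m hm => hb.cg m (procSucc_closed_sub c t hm)
  -- ck
  · intro m hm
    rw [procSucc_known]
    exact Set.mem_insert_of_mem _ (hb.ck (procSucc_closed_sub c t hm))
lemma gOf_procSucc_le {c : AConfig S L I} {t : Tran S L} {x : S} {g : NNReal}
    {p : Option (Tran S L)} (hp : c.par x = some (g, p)) :
    gOf (procSucc ts σh h c t) x ≤ gOf c x := by
  obtain ⟨g', p', hpu, hle'⟩ := parUpd_mono (ts := ts) (t := t) hp
  have h1 : gOf (procSucc ts σh h c t) x = g' := by rw [gOf_procSucc, hpu]; rfl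
  rw [h1, gOf_eq hp]
  exact hle'

lemma expandAll_cons (c : AConfig S L I) (t : Tran S L) (l : List (Tran S L)) :
    expandAll ts σh h c (t :: l) = expandAll ts σh h (procSucc ts σh h c t) l := rfl

lemma fold_pres (hle : ∀ (s : S) (i : I), h s i ≤ ts.hstar s) (s0 : S) :
    ∀ l2 : List (Tran S L), (∀ t ∈ l2, t ∈ ts.trans ∧ t.1 = s0) →
    ∀ c : AConfig S L I, BInv ts c → (∃ g q, c.par s0 = some (g, q)) → CEx ts c l2 →
    BInv ts (expandAll ts σh h c l2) ∧ CEx ts (expandAll ts σh h c l2) [] ∧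
      AExt c (expandAll ts σh h c l2) := by
  intro l2
  induction l2 with
  | nil => exact fun _ c hb _ hce => ⟨hb, hce, AExt.rfl c⟩
  | cons t0 l2' ih =>
    intro hmem c hb hpar hce
    have ht0 := hmem t0 List.mem_cons_self
    rw [expandAll_cons]
    have hb3 : BInv ts (procSucc ts σh h c t0) :=
      procSucc_binv hle ht0.1 (by rw [ht0.2]; exact hpar) hb
    have hpar3 : ∃ g q, (procSucc ts σh h c t0).par s0 = some (g, q) := by
      obtain ⟨g, q, hg⟩ := hpar
      obtain ⟨g', q', hg', _⟩ := (procSucc_ext c t0).1 s0 g q hg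
      exact ⟨g', q', hg'⟩
    have hce3 : CEx ts (procSucc ts σh h c t0) l2' := by
      intro m hm hst t htr ht1 htl
      obtain ⟨hmc, hgm⟩ := procSucc_closed_gOf hle hb hm hst
      by_cases htt : t = t0
      · have ht1' : m = s0 := by rw [← ht1, htt, ht0.2]
        obtain ⟨g, q, hg⟩ := hpar
        have hgq : c.par t.1 = some (g, q) := by rw [htt, ht0.2]; exact hg
        have hgq0 : c.par t0.1 = some (g, q) := by rw [← htt]; exact hgq
        obtain ⟨g', p', hpu, hle'⟩ := parUpd_target (ts := ts) hgq0
        constructor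
        · rw [procSucc_known, htt]
          exact Set.mem_insert _ _
        · have h1 : gOf (procSucc ts σh h c t0) t.2.2 = g' := by
            rw [htt, gOf_procSucc, hpu]; rfl
          have h2 : gOf (procSucc ts σh h c t0) m = g := by
            rw [hgm, ht1']; exact gOf_eq hg
          rw [h1, h2, htt]
          exact hle'
      · have htl' : t ∉ t0 :: l2' := by
          intro hcc
          rcases List.mem_cons.mp hcc with hcc | hcc
          · exact htt hcc
          · exact htl hcc
        obtain ⟨hkn, hgle⟩ := hce m hmc hst t htr ht1 htl'
        constructor
        · rw [procSucc_known]
          exact Set.mem_insert_of_mem _ hkn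
        · obtain ⟨gg, pp, hgg⟩ := hb.kp _ hkn
          calc gOf (procSucc ts σh h c t0) t.2.2 ≤ gOf c t.2.2 := gOf_procSucc_le hgg
            _ ≤ gOf c m + ts.cost t.2.1 := hgle
            _ = gOf (procSucc ts σh h c t0) m + ts.cost t.2.1 := by rw [hgm]
    obtain ⟨hbE, hceE, hextE⟩ :=
      ih (fun t ht => hmem t (List.mem_cons_of_mem _ ht)) (procSucc ts σh h c t0) hb3 hpar3 hce3
    exact ⟨hbE, hceE, (procSucc_ext c t0).trans hextE⟩

lemma walk (c : AConfig S L I) (hce : CEx ts c []) (hcg : ∀ m ∈ c.closed, m ∉ ts.goal) :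
    ∀ (β : List (Tran S L)) (x z : S), ts.IsPathFrom x β z → z ∈ ts.goal → x ∈ c.known →
    ∃ x' β1 β2, β = β1 ++ β2 ∧ ts.IsPathFrom x β1 x' ∧ ts.IsPathFrom x' β2 z ∧
      x' ∈ c.known ∧ x' ∉ c.closed ∧ gOf c x' ≤ gOf c x + ts.pathCost β1 := by
  intro β x z hp
  induction hp with
  | nil s =>
    intro hz hx
    exact ⟨s, [], [], rfl, .nil s, .nil s, hx, fun hc => hcg s hc hz,
      by simp [TransSys.pathCost]⟩
  | @cons s m e l π htr hp' ih =>
    intro hz hx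
    by_cases hs : s ∈ c.closed
    · have hne : ts.hstar s ≠ ⊤ := hstar_ne_top_of_path hz (.cons htr hp')
      have hsucc := hce s hs hne (s, l, m) htr rfl List.not_mem_nil
      obtain ⟨x', β1, β2, heq, hp1, hp2, hk', hc', hg'⟩ := ih hz hsucc.1
      refine ⟨x', (s,l,m) :: β1, β2, by rw [heq]; rfl, .cons htr hp1, hp2, hk', hc', ?_⟩
      rw [pathCost_cons]
      calc gOf c x' ≤ gOf c m + ts.pathCost β1 := hg'
        _ ≤ (gOf c s + ts.cost l) + ts.pathCost β1 := add_le_add_left hsucc.2 _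
        _ = gOf c s + (ts.cost l + ts.pathCost β1) := by rw [add_assoc]
    · exact ⟨s, [], (s,l,m) :: π, rfl, .nil s, .cons htr hp', hx, hs,
        by simp [TransSys.pathCost]⟩

lemma chain_path {c : AConfig S L I}
    (hpn : ∀ s g, c.par s = some (g, none) → s = ts.init)
    (hps : ∀ s g t, c.par s = some (g, some t) → t ∈ ts.trans ∧ t.2.2 = s ∧
      ∃ g1 p1, c.par t.1 = some (g1, p1) ∧ g1 + ts.cost t.2.1 ≤ g) :
    ∀ {s : S} {π : List (Tran S L)}, ParentChain c.par s π →
      ts.IsPathFrom ts.init π s ∧ ∀ g p, c.par s = some (g, p) → ts.pathCost π ≤ g := by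
  intro s π hch
  induction hch with
  | @nil s g hpar =>
    obtain rfl := hpn _ _ hpar
    refine ⟨.nil _, fun g' p' hp' => ?_⟩
    rw [hpar] at hp'
    cases hp'
    simp [TransSys.pathCost]
  | @cons g t π hpar hch ih =>
    obtain ⟨htr, _, g1, p1, hp1, hsum⟩ := hps _ _ _ hpar
    have hpath : ts.IsPathFrom ts.init (π ++ [t]) t.2.2 :=
      isPathFrom_append ih.1 (.cons htr (.nil _))
    refine ⟨hpath, fun g' p' hp' => ?_⟩
    rw [hpar] at hp'
    cases hp'
    rw [pathCost_append]
    have h2 : ts.pathCost [t] = ts.cost t.2.1 := by simp [TransSys.pathCost]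
    rw [h2]
    calc ts.pathCost π + ts.cost t.2.1 ≤ g1 + ts.cost t.2.1 :=
        add_le_add_left (ih.2 g1 p1 hp1) _
      _ ≤ g := hsum
lemma init_inv (hle : ∀ (s : S) (i : I), h s i ≤ ts.hstar s) :
    BInv ts (initAConfig ts σh h) ∧ CEx ts (initAConfig ts σh h) [] ∧
      RO ts (initAConfig ts σh h) := by
  have hpar : (initAConfig ts σh h).par ts.init = some (0, none) := by
    unfold initAConfig
    simp
  have hpar' : ∀ s : S, s ≠ ts.init → (initAConfig ts σh h).par s = none := by
    intro s hs
    unfold initAConfig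
    simp [hs]
  refine ⟨⟨?kp, ?pn, ?ps, ?ek, ?eh, ?eg, ?oc, ?cg, ?ck⟩, ?ce, ?ro⟩
  case kp =>
    intro s hs
    obtain rfl : s = ts.init := hs
    exact ⟨0, none, hpar⟩
  case pn =>
    intro s g hp
    by_cases hs : s = ts.init
    · exact hs
    · rw [hpar' s hs] at hp
      cases hp
  case ps =>
    intro s g t hp
    by_cases hs : s = ts.init
    · subst hs
      rw [hpar] at hp
      simp at hp
    · rw [hpar' s hs] at hp
      cases hp
  case ek =>
    intro en hen
    by_cases hT : h ts.init σh.initInfo = ⊤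
    · simp only [initAConfig, if_pos hT] at hen
      exact absurd hen (Multiset.notMem_zero _)
    · simp only [initAConfig, if_neg hT] at hen
      obtain rfl := Multiset.mem_singleton.mp hen
      exact rfl
  case eh =>
    intro en hen
    by_cases hT : h ts.init σh.initInfo = ⊤
    · simp only [initAConfig, if_pos hT] at hen
      exact absurd hen (Multiset.notMem_zero _)
    · simp only [initAConfig, if_neg hT] at hen
      obtain rfl := Multiset.mem_singleton.mp hen
      exact hle _ _
  case eg =>
    intro en hen
    by_cases hT : h ts.init σh.initInfo = ⊤
    · simp only [initAConfig, if_pos hT] at hen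
      exact absurd hen (Multiset.notMem_zero _)
    · simp only [initAConfig, if_neg hT] at hen
      obtain rfl := Multiset.mem_singleton.mp hen
      exact ⟨0, none, hpar, le_rfl⟩
  case oc =>
    intro m hm hmc hst
    obtain rfl : m = ts.init := hm
    by_cases hT : h ts.init σh.initInfo = ⊤
    · exact absurd (top_le_iff.mp (hT ▸ hle ts.init σh.initInfo)) hst
    · refine ⟨h ts.init σh.initInfo, ?_⟩
      have hg0 : gOf (initAConfig ts σh h) ts.init = 0 := gOf_eq hpar
      rw [hg0]
      show _ ∈ (initAConfig ts σh h).openq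
      simp only [initAConfig, if_neg hT]
      exact Multiset.mem_singleton.mpr rfl
  case cg => exact fun m hm => absurd hm (Set.notMem_empty m)
  case ck => exact fun m hm => absurd hm (Set.notMem_empty m)
  case ce => exact fun m hm => absurd hm (Set.notMem_empty m)
  case ro =>
    intro z hz π0 hp0
    refine ⟨ts.init, [], π0, rfl, .nil _, hp0, rfl, Set.notMem_empty _, ?_⟩
    rw [gOf_eq hpar]
    simp

lemma astep_pres (hle : ∀ (s : S) (i : I), h s i ≤ ts.hstar s) {c c' : AConfig S L I}
    {lab : ALab S L} (hb : BInv ts c) (hce : CEx ts c []) (hro : RO ts c)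
    (hst : AStep ts σh h true c lab (.cont c')) :
    BInv ts c' ∧ CEx ts c' [] ∧ RO ts c' := by
  cases hst with
  | @dup en rest hq hmin hcl =>
    refine ⟨⟨hb.kp, hb.pn, hb.ps, ?_, ?_, ?_, ?_, hb.cg, hb.ck⟩, hce, hro⟩
    · exact fun en' hen' => hb.ek en' (by rw [hq]; exact Multiset.mem_cons_of_mem hen')
    · exact fun en' hen' => hb.eh en' (by rw [hq]; exact Multiset.mem_cons_of_mem hen')
    · exact fun en' hen' => hb.eg en' (by rw [hq]; exact Multiset.mem_cons_of_mem hen')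
    · intro m hm hmc hstm
      obtain ⟨hv, hmem⟩ := hb.oc m hm hmc hstm
      rw [hq] at hmem
      rcases Multiset.mem_cons.mp hmem with he | hmem
      · exact absurd (by rw [← he] at hcl; exact hcl) hmc
      · exact ⟨hv, hmem⟩
  | @reevFin en rest hq hmin hncl hre hlt hne =>
    refine ⟨⟨hb.kp, hb.pn, hb.ps, ?_, ?_, ?_, ?_, hb.cg, hb.ck⟩, hce, hro⟩
    · intro en' hen'
      rcases Multiset.mem_cons.mp hen' with rfl | hen'
      · exact hb.ek en (by rw [hq]; exact Multiset.mem_cons_self _ _)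
      · exact hb.ek en' (by rw [hq]; exact Multiset.mem_cons_of_mem hen')
    · intro en' hen'
      rcases Multiset.mem_cons.mp hen' with rfl | hen'
      · exact hle _ _
      · exact hb.eh en' (by rw [hq]; exact Multiset.mem_cons_of_mem hen')
    · intro en' hen'
      rcases Multiset.mem_cons.mp hen' with rfl | hen'
      · obtain ⟨g, p, hp⟩ := hb.kp _ (hb.ek en (by rw [hq]; exact Multiset.mem_cons_self _ _))
        exact ⟨g, p, hp, (gOf_eq hp).ge⟩
      · exact hb.eg en' (by rw [hq]; exact Multiset.mem_cons_of_mem hen')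
    · intro m hm hmc hstm
      obtain ⟨hv, hmem⟩ := hb.oc m hm hmc hstm
      rw [hq] at hmem
      rcases Multiset.mem_cons.mp hmem with he | hmem
      · have hm1 : m = en.1 := congrArg (·.1) he
        refine ⟨h en.1 (σh.refine c.info en.1), ?_⟩
        show (m, gOf c m, _) ∈ _
        rw [hm1]
        exact Multiset.mem_cons_self _ _
      · exact ⟨hv, Multiset.mem_cons_of_mem hmem⟩
  | @reevInf en rest hq hmin hncl hre hlt hinf =>
    refine ⟨⟨hb.kp, hb.pn, hb.ps, ?_, ?_, ?_, ?_, hb.cg, hb.ck⟩, hce, hro⟩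
    · exact fun en' hen' => hb.ek en' (by rw [hq]; exact Multiset.mem_cons_of_mem hen')
    · exact fun en' hen' => hb.eh en' (by rw [hq]; exact Multiset.mem_cons_of_mem hen')
    · exact fun en' hen' => hb.eg en' (by rw [hq]; exact Multiset.mem_cons_of_mem hen')
    · intro m hm hmc hstm
      obtain ⟨hv, hmem⟩ := hb.oc m hm hmc hstm
      rw [hq] at hmem
      rcases Multiset.mem_cons.mp hmem with he | hmem
      · have hm1 : m = en.1 := congrArg (·.1) he
        exact absurd (top_le_iff.mp (hinf ▸ hle en.1 (σh.refine c.info en.1)))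
          (by rw [hm1] at hstm; exact hstm)
      · exact ⟨hv, hmem⟩
  | @expand en rest l hq hmin hncl hnre hgoal hsl =>
    have henk : en.1 ∈ c.known := hb.ek en (by rw [hq]; exact Multiset.mem_cons_self _ _)
    set c1 : AConfig S L I :=
      { c with openq := rest, closed := insert en.1 c.closed, info := σh.refine c.info en.1 }
      with hc1
    have hb1 : BInv ts c1 := by
      refine ⟨hb.kp, hb.pn, hb.ps, ?_, ?_, ?_, ?_, ?_, ?_⟩
      · exact fun en' hen' => hb.ek en' (by rw [hq]; exact Multiset.mem_cons_of_mem hen')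
      · exact fun en' hen' => hb.eh en' (by rw [hq]; exact Multiset.mem_cons_of_mem hen')
      · exact fun en' hen' => hb.eg en' (by rw [hq]; exact Multiset.mem_cons_of_mem hen')
      · intro m hm hmc hstm
        have hmc' : m ∉ c.closed := fun hcc => hmc (Set.mem_insert_of_mem _ hcc)
        have hme : m ≠ en.1 := fun he => hmc (he ▸ Set.mem_insert _ _)
        obtain ⟨hv, hmem⟩ := hb.oc m hm hmc' hstm
        rw [hq] at hmem
        rcases Multiset.mem_cons.mp hmem with he | hmem
        · exact absurd (congrArg (·.1) he) hme
        · exact ⟨hv, hmem⟩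
      · intro m hm
        rcases Set.mem_insert_iff.mp hm with rfl | hm
        · exact hgoal
        · exact hb.cg _ hm
      · intro m hm
        rcases Set.mem_insert_iff.mp hm with rfl | hm
        · exact henk
        · exact hb.ck hm
    have hce1 : CEx ts c1 l := by
      intro m hm hstm t htr ht1 htl
      rcases Set.mem_insert_iff.mp hm with rfl | hm
      · exact absurd ((hsl.2 t).mpr ⟨htr, ht1⟩) htl
      · exact hce m hm hstm t htr ht1 List.not_mem_nil
    have hpar1 : ∃ g q, c1.par en.1 = some (g, q) := hb.kp _ henk
    obtain ⟨hb', hce', hext'⟩ :=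
      fold_pres hle en.1 l (fun t ht => (hsl.2 t).mp ht) c1 hb1 hpar1 hce1
    refine ⟨hb', hce', ?_⟩
    intro z hz π0 hp0
    obtain ⟨x, α, β, heq, hpα, hpβ, hxk, hxc, hxg⟩ := hro z hz π0 hp0
    by_cases hxe : x = en.1
    · subst hxe
      have hxk1 : en.1 ∈ (expandAll ts σh h c1 l).known := hext'.2.1 hxk
      obtain ⟨x', β1, β2, hbeq, hpb1, hpb2, hk', hcl', hg'⟩ :=
        walk (expandAll ts σh h c1 l) hce' hb'.cg β en.1 z hpβ hz hxk1
      refine ⟨x', α ++ β1, β2, by rw [heq, hbeq, List.append_assoc],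
        isPathFrom_append hpα hpb1, hpb2, hk', hcl', ?_⟩
      have hdec : gOf (expandAll ts σh h c1 l) en.1 ≤ gOf c en.1 := by
        obtain ⟨g, p, hp⟩ := hb.kp _ hxk
        obtain ⟨g', p', hp', hle'⟩ := hext'.1 en.1 g p hp
        rw [gOf_eq hp', gOf_eq hp]
        exact hle'
      have hN : gOf (expandAll ts σh h c1 l) x' ≤ ts.pathCost α + ts.pathCost β1 :=
        hg'.trans (add_le_add (hdec.trans (ENNReal.coe_le_coe.mp hxg)) le_rfl)
      rw [pathCost_append]
      exact_mod_cast hN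
    · refine ⟨x, α, β, heq, hpα, hpβ, hext'.2.1 hxk, ?_, ?_⟩
      · intro hcc
        rcases Set.mem_insert_iff.mp (hext'.2.2.1 hcc) with he | hcc'
        · exact hxe he
        · exact hxc hcc'
      · obtain ⟨g, p, hp⟩ := hb.kp _ hxk
        obtain ⟨g', p', hp', hle'⟩ := hext'.1 x g p hp
        calc (gOf (expandAll ts σh h c1 l) x : ℝ≥0∞) = (g' : ℝ≥0∞) := by rw [gOf_eq hp']
          _ ≤ (g : ℝ≥0∞) := ENNReal.coe_le_coe.mpr hle'
          _ = (gOf c x : ℝ≥0∞) := by rw [gOf_eq hp]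
          _ ≤ _ := hxg

end AuxStmt17

theorem stmt17 {S L : Type} [Fintype S] [Fintype L] (ts : TransSys S L)
    (hC hA : S → ℝ≥0∞)
    (hCadm : ∀ s : S, hC s ≤ ts.hstar s) (hAadm : ∀ s : S, hA s ≤ ts.hstar s) :
    DynAdmissible ts (lazySrc ts) (lazyH hC hA) ∧
    ∀ (e : ℕ → AConfig S L (S → CA)) (lab : ℕ → ALab S L) (N : ℕ),
      IsExec ts (lazySrc ts) (lazyH hC hA) true e lab N →
      ∀ (l : ALab S L) (π : List (Tran S L)),
        AStep ts (lazySrc ts) (lazyH hC hA) true (e N) l (AOut.retPath π) →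
        ts.Solution π ∧ (ts.pathCost π : ℝ≥0∞) = ts.hstar ts.init := by
  have hle : ∀ (s : S) (i : S → CA), lazyH hC hA s i ≤ ts.hstar s := by
    intro s i
    unfold lazyH
    cases hsi : i s
    · simpa [hsi] using hCadm s
    · simpa [hsi] using hAadm s
  refine ⟨fun s i _ => hle s i, ?_⟩
  intro e lab N hexec l π hstep
  have hinv : ∀ n, n ≤ N →
      BInv ts (e n) ∧ CEx ts (e n) [] ∧ RO ts (e n) := by
    intro n
    induction n with
    | zero => intro _; rw [hexec.1]; exact init_inv hle
    | succ k ihk =>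
      intro hk
      obtain ⟨hb, hce, hro⟩ := ihk (Nat.le_of_succ_le hk)
      exact astep_pres hle hb hce hro (hexec.2 k hk)
  obtain ⟨hb, hce, hro⟩ := hinv N le_rfl
  cases hstep with
  | @retGoal en rest _πx hq hmin hncl hnre hgoal hchain =>
    obtain ⟨hpath, hcost⟩ := chain_path hb.pn hb.ps hchain
    have hsol : ts.Solution π := ⟨en.1, hgoal, hpath⟩
    refine ⟨hsol, le_antisymm ?_ ?_⟩
    · unfold TransSys.hstar
      refine le_sInf ?_
      intro b hbmem
      obtain ⟨π0, z, hz, hp0, rfl⟩ := hbmem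
      obtain ⟨x, α, β, heq, hpα, hpβ, hxk, hxc, hxg⟩ := hro z hz π0 hp0
      have hstx : ts.hstar x ≠ ⊤ := hstar_ne_top_of_path hz hpβ
      obtain ⟨hv, hmem⟩ := hb.oc x hxk hxc hstx
      have hfen : fval en ≤ fval (x, gOf (e N) x, hv) := hmin _ hmem
      have h1 : fval (x, gOf (e N) x, hv) ≤ (ts.pathCost π0 : ℝ≥0∞) := by
        have he : fval (x, gOf (e N) x, hv) = (gOf (e N) x : ℝ≥0∞) + hv := rfl
        rw [he, heq, pathCost_append, ENNReal.coe_add]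
        exact add_le_add hxg ((hb.eh _ hmem).trans (hstar_le_of_path hz hpβ))
      obtain ⟨g, p, hp, hge⟩ := hb.eg en (by rw [hq]; exact Multiset.mem_cons_self _ _)
      have h2 : ts.pathCost π ≤ g := hcost g p hp
      calc (ts.pathCost π : ℝ≥0∞) ≤ (en.2.1 : ℝ≥0∞) := ENNReal.coe_le_coe.mpr (h2.trans hge)
        _ ≤ fval en := by
            rw [show fval en = (en.2.1 : ℝ≥0∞) + en.2.2 from rfl]
            exact le_self_add
        _ ≤ _ := hfen.trans h1
    · exact sInf_le ⟨π, en.1, hgoal, hpath, rfl⟩
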